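/- (Strong subadditivity.) For any sets E₁, E₂ ⊂ Ω, C̃_{BV^{p(·)}}(E₁ ∪ E₂) + C̃_{BV^{p(·)}}(E₁ ∩ E₂) ≤ C̃_{BV^{p(·)}}(E₁) + C̃_{BV^{p(·)}}(E₂). -/

import Mathlib

open MeasureTheory Filter Topology ENNReal Set

noncomputable section

/-- Euclidean space `ℝⁿ`. -/
abbrev Eu (n : ℕ) : Type := EuclideanSpace ℝ (Fin n)

/-- The modular `ρ_{p(·)}(u) = ∫_Ω |u|^{p(x)} dx`. -/
def vModular {n : ℕ} (p : Eu n → ℝ) (Ω : Set (Eu n)) (u : Eu n → ℝ) : ℝ≥0∞ :=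
  ∫⁻ x in Ω, ENNReal.ofReal (|u x| ^ p x)

/-- The gradient modular `∫_Ω |∇u|^{p(x)} dx` (for a.e. differentiable `u`,
`fderiv` is the gradient). -/
def gradModular {n : ℕ} (p : Eu n → ℝ) (Ω : Set (Eu n)) (u : Eu n → ℝ) : ℝ≥0∞ :=
  ∫⁻ x in Ω, ENNReal.ofReal (‖fderiv ℝ u x‖ ^ p x)

/-- Membership in the variable exponent Lebesgue space `L^{p(·)}(Ω)`. -/
def MemLpVar {n : ℕ} (p : Eu n → ℝ) (Ω : Set (Eu n)) (u : Eu n → ℝ) : Prop :=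
  Measurable u ∧ ∃ l : ℝ, 0 < l ∧ vModular p Ω (fun x => u x / l) < ⊤

/-- The Luxemburg norm on `L^{p(·)}(Ω)`. -/
def luxNorm {n : ℕ} (p : Eu n → ℝ) (Ω : Set (Eu n)) (u : Eu n → ℝ) : ℝ :=
  sInf {l : ℝ | 0 < l ∧ vModular p Ω (fun x => u x / l) ≤ 1}

/-- Convergence `v i → u` in `L^{p(·)}(Ω)` (Luxemburg norm convergence). -/
def LpTendsto {n : ℕ} (p : Eu n → ℝ) (Ω : Set (Eu n)) (v : ℕ → Eu n → ℝ)
    (u : Eu n → ℝ) : Prop :=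
  Tendsto (fun i => luxNorm p Ω (fun x => v i x - u x)) atTop (𝓝 0)

/-- `u` is locally Lipschitz on `Ω`. -/
def LocLipOn {n : ℕ} (Ω : Set (Eu n)) (u : Eu n → ℝ) : Prop :=
  ∀ x ∈ Ω, ∃ K : NNReal, ∃ t ∈ 𝓝[Ω] x, LipschitzOnWith K u t

/-- The relaxed mixed pseudo-modular `ρ̃_{BV^{p(·)}(Ω)}(u)`: the infimum of
`liminf_i ∫_Ω |∇u_i|^{p(x)} dx` over all sequences of locally Lipschitz functions
in `L^{p(·)}(Ω)` converging to `u` in `L^{p(·)}(Ω)`. -/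
def bvModular {n : ℕ} (p : Eu n → ℝ) (Ω : Set (Eu n)) (u : Eu n → ℝ) : ℝ≥0∞ :=
  ⨅ (v : ℕ → Eu n → ℝ)
    (_ : (∀ i, LocLipOn Ω (v i) ∧ MemLpVar p Ω (v i)) ∧ LpTendsto p Ω v u),
    Filter.liminf (fun i => gradModular p Ω (v i)) atTop

/-- Membership in the mixed space `B̃V^{p(·)}(Ω)`. -/
def MemBVt {n : ℕ} (p : Eu n → ℝ) (Ω : Set (Eu n)) (u : Eu n → ℝ) : Prop :=
  MemLpVar p Ω u ∧ bvModular p Ω u < ⊤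

/-- The norm `‖u‖_{B̃V^{p(·)}}`. -/
def bvNorm {n : ℕ} (p : Eu n → ℝ) (Ω : Set (Eu n)) (u : Eu n → ℝ) : ℝ :=
  luxNorm p Ω u + sInf {l : ℝ | 0 < l ∧ bvModular p Ω (fun x => u x / l) ≤ 1}

/-- The admissible class `Ã(E)` for the mixed capacity. -/
def admissibleBV {n : ℕ} (p : Eu n → ℝ) (Ω E : Set (Eu n)) : Set (Eu n → ℝ) :=
  {u | MemBVt p Ω u ∧ (∀ x ∈ Ω, 0 ≤ u x ∧ u x ≤ 1) ∧
       ∃ U : Set (Eu n), IsOpen U ∧ E ⊆ U ∧ ∀ x ∈ U ∩ Ω, u x = 1}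

/-- The mixed BV-Sobolev capacity `C̃_{BV^{p(·)}}(E)` (with `inf ∅ = ∞`). -/
def bvCapacity {n : ℕ} (p : Eu n → ℝ) (Ω E : Set (Eu n)) : ℝ≥0∞ :=
  ⨅ (u : Eu n → ℝ) (_ : u ∈ admissibleBV p Ω E), vModular p Ω u + bvModular p Ω u

/-- Divergence of a vector field. -/
def divg {n : ℕ} (φ : Eu n → Eu n) (x : Eu n) : ℝ :=
  ∑ i, fderiv ℝ φ x (EuclideanSpace.single i 1) i

/-- Total variation `‖Du‖(U)` on an open set `U`, via the defining supremum over
`C¹` vector fields compactly supported in `U` with `|φ| ≤ 1`. -/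
def totVarOpen {n : ℕ} (U : Set (Eu n)) (u : Eu n → ℝ) : ℝ≥0∞ :=
  ⨆ (φ : Eu n → Eu n)
    (_ : ContDiff ℝ 1 φ ∧ HasCompactSupport φ ∧ tsupport φ ⊆ U ∧ ∀ x, ‖φ x‖ ≤ 1),
    ENNReal.ofReal (∫ x in U, u x * divg φ x)

/-- Total variation `‖Du‖(A)` of a set `A ⊆ Ω`, extended from open sets. -/
def totVarIn {n : ℕ} (Ω A : Set (Eu n)) (u : Eu n → ℝ) : ℝ≥0∞ :=
  ⨅ (U : Set (Eu n)) (_ : IsOpen U ∧ A ⊆ U ∧ U ⊆ Ω), totVarOpen U u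

/-- `g` is the weak (distributional) gradient of `u` on `Ω`. -/
def IsWeakGrad {n : ℕ} (Ω : Set (Eu n)) (u : Eu n → ℝ) (g : Eu n → Eu n) : Prop :=
  ∀ φ : Eu n → ℝ, ContDiff ℝ 1 φ → HasCompactSupport φ → tsupport φ ⊆ Ω →
    ∀ i : Fin n,
      (∫ x in Ω, u x * (fderiv ℝ φ x (EuclideanSpace.single i 1))) =
        - ∫ x in Ω, g x i * φ x

/-- The Harjulehto–Hästö–Latvala mixed pseudo-modular
`ρ_{BV^{p(·)}(F)}(u) = ‖Du‖(F ∩ Y) + ∫_{F∖Y} |∇u|^{p(x)} dx`, where `Y = {p = 1}`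
and `g` is the weak gradient of `u` on the Sobolev part. -/
def hhlModular {n : ℕ} (p : Eu n → ℝ) (Ω F : Set (Eu n)) (u : Eu n → ℝ)
    (g : Eu n → Eu n) : ℝ≥0∞ :=
  totVarIn Ω (F ∩ {x | p x = 1}) u +
    ∫⁻ x in F \ {x | p x = 1}, ENNReal.ofReal (‖g x‖ ^ p x)

/-- The HHL mixed pseudo-modular for (smooth) functions whose gradient is `fderiv`. -/
def hhlModularSmooth {n : ℕ} (p : Eu n → ℝ) (Ω F : Set (Eu n)) (v : Eu n → ℝ) : ℝ≥0∞ :=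
  totVarIn Ω (F ∩ {x | p x = 1}) v +
    ∫⁻ x in F \ {x | p x = 1}, ENNReal.ofReal (‖fderiv ℝ v x‖ ^ p x)

/-- Membership in the HHL space `BV^{p(·)}(Ω)`: `u ∈ L^{p(·)}(Ω)` and
`inf{λ > 0 : ρ_{BV^{p(·)}(Ω)}(u/λ) ≤ 1} < ∞`. -/
def MemBVp {n : ℕ} (p : Eu n → ℝ) (Ω : Set (Eu n)) (u : Eu n → ℝ) : Prop :=
  MemLpVar p Ω u ∧
    ∃ g : Eu n → Eu n, IsWeakGrad (Ω \ {x | p x = 1}) u g ∧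
      ∃ l : ℝ, 0 < l ∧
        hhlModular p Ω Ω (fun x => u x / l) (fun x => l⁻¹ • g x) ≤ 1

/-- Mollification `u_δ = φ_δ ∗ u` (with `u` extended by zero outside `Ω`),
where `φ_δ(z) = δ^{-n} φ(z/δ)`. -/
def mollify {n : ℕ} (Ω : Set (Eu n)) (u : Eu n → ℝ) (φ : Eu n → ℝ) (δ : ℝ)
    (x : Eu n) : ℝ :=
  ∫ y in Ω, (δ ^ n)⁻¹ * φ (δ⁻¹ • (x - y)) * u y

/-- `p` is (locally) log-Hölder continuous on `Ω` with constant `c`. -/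
def LogHolderOn {n : ℕ} (c : ℝ) (Ω : Set (Eu n)) (p : Eu n → ℝ) : Prop :=
  ∀ x ∈ Ω, ∀ y ∈ Ω, |p x - p y| ≤ c / Real.log (Real.exp 1 + 1 / dist x y)

/-- `p` is globally log-Hölder continuous on `ℝⁿ` with constant `c`. -/
def LogHolderGlobal {n : ℕ} (c : ℝ) (p : Eu n → ℝ) : Prop :=
  LogHolderOn c Set.univ p ∧
    ∃ pinf : ℝ, 1 ≤ pinf ∧ ∀ x, |p x - pinf| ≤ c / Real.log (Real.exp 1 + ‖x‖)

/-- The variable exponent Sobolev capacity `C_{p(·)}(E)`: infimum of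
`∫ |u|^{p(x)} + |∇u|^{p(x)} dx` over `u ∈ W^{1,p(·)}(ℝⁿ)` with `u ≥ 1` on an
open set containing `E`. -/
def sobolevCapacity {n : ℕ} (p : Eu n → ℝ) (E : Set (Eu n)) : ℝ≥0∞ :=
  ⨅ (u : Eu n → ℝ) (g : Eu n → Eu n)
    (_ : MemLpVar p Set.univ u ∧ IsWeakGrad Set.univ u g ∧
         MemLpVar p Set.univ (fun x => ‖g x‖) ∧
         ∃ U : Set (Eu n), IsOpen U ∧ E ⊆ U ∧ ∀ x ∈ U, 1 ≤ u x),
    vModular p Set.univ u + ∫⁻ x, ENNReal.ofReal (‖g x‖ ^ p x)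

/-!
Take admissible functions `u₁`, `u₂` for `E₁`, `E₂`; then `max u₁ u₂` is admissible for `E₁ ∪ E₂`
and `min u₁ u₂` for `E₁ ∩ E₂`, and pointwise `|max|^p + |min|^p = |u₁|^p + |u₂|^p`.
For the relaxed modular, take locally Lipschitz approximations `v → u₁`, `w → u₂` along
subsequences realising the `liminf`s. Then `max v w → max u₁ u₂` and `min v w → min u₁ u₂`
in `L^{p(·)}`, because `|max a b - max c d| ≤ |a - c| + |b - d|` and the Luxemburg norm is
subadditive. At almost every point (Rademacher) the graph of `max v w` touches that of `v` or
of `w` from above, so its gradient is `∇v` or `∇w`, and `min v w` takes the other one: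
the gradient energies of `max v w` and `min v w` add up to at most those of `v` and `w`.
-/

lemma abs_max_sub_max_le_add (a b c d : ℝ) : |max a b - max c d| ≤ |a - c| + |b - d| :=
  (abs_max_sub_max_le_max a b c d).trans (max_le_add_of_nonneg (abs_nonneg _) (abs_nonneg _))

lemma abs_min_sub_min_le_add (a b c d : ℝ) : |min a b - min c d| ≤ |a - c| + |b - d| :=
  (abs_min_sub_min_le_max a b c d).trans (max_le_add_of_nonneg (abs_nonneg _) (abs_nonneg _))

lemma rpow_abs_div_add_le {q a b f g h : ℝ} (hq : 1 ≤ q) (ha : 0 < a) (hb : 0 < b)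
    (hh : |h| ≤ |f| + |g|) :
    |h / (a + b)| ^ q ≤ a / (a + b) * |f / a| ^ q + b / (a + b) * |g / b| ^ q := by
  have hab : 0 < a + b := add_pos ha hb
  have hconv : |h / (a + b)| ≤ a / (a + b) * |f / a| + b / (a + b) * |g / b| := by
    rw [abs_div, abs_div, abs_div, abs_of_pos ha, abs_of_pos hb, abs_of_pos hab]
    field_simp
    exact hh
  calc |h / (a + b)| ^ q ≤ (a / (a + b) * |f / a| + b / (a + b) * |g / b|) ^ q :=
        Real.rpow_le_rpow (abs_nonneg _) hconv (by linarith)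
    _ ≤ a / (a + b) * |f / a| ^ q + b / (a + b) * |g / b| ^ q :=
        (convexOn_rpow hq).2 (Set.mem_Ici.2 (abs_nonneg _)) (Set.mem_Ici.2 (abs_nonneg _))
          (by positivity) (by positivity) (by field_simp)

lemma rpow_abs_div_le {q t : ℝ} (y : ℝ) (hq : 1 ≤ q) (ht : 1 ≤ t) :
    |y / t| ^ q ≤ t⁻¹ * |y| ^ q := by
  have ht₀ : 0 < t := by linarith
  rw [div_eq_mul_inv, abs_mul, abs_of_pos (inv_pos.2 ht₀),
    Real.mul_rpow (abs_nonneg _) (inv_nonneg.2 ht₀.le), mul_comm]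
  gcongr
  calc t⁻¹ ^ q ≤ t⁻¹ ^ (1 : ℝ) :=
        Real.rpow_le_rpow_of_exponent_ge (inv_pos.2 ht₀) (inv_le_one_of_one_le₀ ht) hq
    _ = t⁻¹ := Real.rpow_one _

section Modular

variable {n : ℕ} {p : Eu n → ℝ} {Ω : Set (Eu n)}

lemma vModular_div_add_le (hpm : Measurable p) (hp1 : ∀ x ∈ Ω, 1 ≤ p x)
    {f g h : Eu n → ℝ} (hf : Measurable f) (hg : Measurable g)
    (hh : ∀ x, |h x| ≤ |f x| + |g x|) {a b : ℝ} (ha : 0 < a) (hb : 0 < b) :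
    vModular p Ω (fun x => h x / (a + b)) ≤
      ENNReal.ofReal (a / (a + b)) * vModular p Ω (fun x => f x / a) +
      ENNReal.ofReal (b / (a + b)) * vModular p Ω (fun x => g x / b) := by
  have hmf : Measurable fun x => ENNReal.ofReal (|f x / a| ^ p x) :=
    ((hf.div_const a).abs.pow hpm).ennreal_ofReal
  have hmg : Measurable fun x => ENNReal.ofReal (|g x / b| ^ p x) :=
    ((hg.div_const b).abs.pow hpm).ennreal_ofReal
  unfold vModular
  rw [← lintegral_const_mul _ hmf, ← lintegral_const_mul _ hmg,
    ← lintegral_add_left (hmf.const_mul _)]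
  refine setLIntegral_mono ((hmf.const_mul _).add (hmg.const_mul _)) fun x hx => ?_
  rw [← ENNReal.ofReal_mul (by positivity), ← ENNReal.ofReal_mul (by positivity),
    ← ENNReal.ofReal_add (by positivity) (by positivity)]
  exact ENNReal.ofReal_le_ofReal (rpow_abs_div_add_le (hp1 x hx) ha hb (hh x))

lemma vModular_div_le (hpm : Measurable p) (hp1 : ∀ x ∈ Ω, 1 ≤ p x) {f : Eu n → ℝ}
    (hf : Measurable f) {t : ℝ} (ht : 1 ≤ t) :
    vModular p Ω (fun x => f x / t) ≤ ENNReal.ofReal t⁻¹ * vModular p Ω f := by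
  unfold vModular
  rw [← lintegral_const_mul' _ _ ENNReal.ofReal_ne_top]
  refine setLIntegral_mono ((hf.abs.pow hpm).ennreal_ofReal.const_mul _) fun x hx => ?_
  rw [← ENNReal.ofReal_mul (inv_nonneg.2 (by linarith))]
  exact ENNReal.ofReal_le_ofReal (rpow_abs_div_le _ (hp1 x hx) ht)

lemma vModular_max_add_min (hpm : Measurable p) {u₁ u₂ : Eu n → ℝ}
    (h₁ : Measurable u₁) (h₂ : Measurable u₂) :
    vModular p Ω (fun x => max (u₁ x) (u₂ x)) + vModular p Ω (fun x => min (u₁ x) (u₂ x)) =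
      vModular p Ω u₁ + vModular p Ω u₂ := by
  unfold vModular
  rw [← lintegral_add_left ((h₁.max h₂).abs.pow hpm).ennreal_ofReal,
    ← lintegral_add_left (h₁.abs.pow hpm).ennreal_ofReal]
  congr 1
  funext x
  beta_reduce
  rcases le_total (u₁ x) (u₂ x) with h | h
  · rw [max_eq_right h, min_eq_left h, add_comm]
  · rw [max_eq_left h, min_eq_right h]

lemma MemLpVar.of_abs_le_add (hpm : Measurable p) (hp1 : ∀ x ∈ Ω, 1 ≤ p x)
    {f g h : Eu n → ℝ} (hf : MemLpVar p Ω f) (hg : MemLpVar p Ω g) (hhm : Measurable h)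
    (hh : ∀ x, |h x| ≤ |f x| + |g x|) : MemLpVar p Ω h := by
  obtain ⟨hfm, a, ha, hfa⟩ := hf
  obtain ⟨hgm, b, hb, hgb⟩ := hg
  refine ⟨hhm, a + b, add_pos ha hb, (vModular_div_add_le hpm hp1 hfm hgm hh ha hb).trans_lt ?_⟩
  exact ENNReal.add_lt_top.2 ⟨ENNReal.mul_lt_top ENNReal.ofReal_lt_top hfa,
    ENNReal.mul_lt_top ENNReal.ofReal_lt_top hgb⟩

lemma MemLpVar.sub (hpm : Measurable p) (hp1 : ∀ x ∈ Ω, 1 ≤ p x) {f g : Eu n → ℝ}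
    (hf : MemLpVar p Ω f) (hg : MemLpVar p Ω g) : MemLpVar p Ω (fun x => f x - g x) :=
  hf.of_abs_le_add hpm hp1 hg (hf.1.sub hg.1) fun _ => abs_sub _ _

lemma MemLpVar.max (hpm : Measurable p) (hp1 : ∀ x ∈ Ω, 1 ≤ p x) {f g : Eu n → ℝ}
    (hf : MemLpVar p Ω f) (hg : MemLpVar p Ω g) : MemLpVar p Ω (fun x => max (f x) (g x)) :=
  hf.of_abs_le_add hpm hp1 hg (hf.1.max hg.1) fun x => by
    simpa using abs_max_sub_max_le_add (f x) (g x) 0 0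

lemma MemLpVar.min (hpm : Measurable p) (hp1 : ∀ x ∈ Ω, 1 ≤ p x) {f g : Eu n → ℝ}
    (hf : MemLpVar p Ω f) (hg : MemLpVar p Ω g) : MemLpVar p Ω (fun x => min (f x) (g x)) :=
  hf.of_abs_le_add hpm hp1 hg (hf.1.min hg.1) fun x => by
    simpa using abs_min_sub_min_le_add (f x) (g x) 0 0

lemma MemLpVar.exists_vModular_div_le_one (hpm : Measurable p) (hp1 : ∀ x ∈ Ω, 1 ≤ p x)
    {f : Eu n → ℝ} (hf : MemLpVar p Ω f) :
    ∃ l, 0 < l ∧ vModular p Ω (fun x => f x / l) ≤ 1 := by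
  obtain ⟨hfm, l, hl, hfin⟩ := hf
  obtain ⟨k, hk⟩ := ENNReal.exists_nat_gt hfin.ne
  have hk₁ : (1 : ℝ) ≤ k + 1 := by linarith [k.cast_nonneg (α := ℝ)]
  refine ⟨l * (k + 1), by positivity, ?_⟩
  calc vModular p Ω (fun x => f x / (l * (k + 1)))
      = vModular p Ω (fun x => f x / l / (k + 1)) := by simp only [div_div]
    _ ≤ ENNReal.ofReal (k + 1 : ℝ)⁻¹ * vModular p Ω (fun x => f x / l) :=
        vModular_div_le hpm hp1 (hfm.div_const l) hk₁
    _ ≤ ENNReal.ofReal (k + 1 : ℝ)⁻¹ * ENNReal.ofReal (k + 1) := by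
        gcongr
        rw [ENNReal.ofReal_add k.cast_nonneg zero_le_one, ENNReal.ofReal_natCast,
          ENNReal.ofReal_one]
        exact hk.le.trans le_self_add
    _ = 1 := by
        rw [← ENNReal.ofReal_mul (by positivity), inv_mul_cancel₀ (by positivity),
          ENNReal.ofReal_one]

lemma luxNorm_nonneg (u : Eu n → ℝ) : 0 ≤ luxNorm p Ω u :=
  Real.sInf_nonneg fun _ hl => hl.1.le

/-- The hypotheses `hf`, `hg` matter: `luxNorm` of a function outside `L^{p(·)}` is the junk
value `sInf ∅ = 0`. -/
lemma luxNorm_le_add_of_abs_le_add (hpm : Measurable p) (hp1 : ∀ x ∈ Ω, 1 ≤ p x)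
    {f g h : Eu n → ℝ} (hf : MemLpVar p Ω f) (hg : MemLpVar p Ω g)
    (hh : ∀ x, |h x| ≤ |f x| + |g x|) :
    luxNorm p Ω h ≤ luxNorm p Ω f + luxNorm p Ω g := by
  set S : (Eu n → ℝ) → Set ℝ := fun u => {l : ℝ | 0 < l ∧ vModular p Ω (fun x => u x / l) ≤ 1}
  have hbdd : ∀ u, BddBelow (S u) := fun _ => ⟨0, fun _ hl => hl.1.le⟩
  have hf₁ : (S f).Nonempty := hf.exists_vModular_div_le_one hpm hp1
  have hg₁ : (S g).Nonempty := hg.exists_vModular_div_le_one hpm hp1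
  change sInf (S h) ≤ sInf (S f) + sInf (S g)
  rw [← csInf_add hf₁ (hbdd f) hg₁ (hbdd g)]
  refine csInf_le_csInf (hbdd h) (hf₁.add hg₁) ?_
  rintro _ ⟨a, ⟨ha, hfa⟩, b, ⟨hb, hgb⟩, rfl⟩
  refine ⟨add_pos ha hb, (vModular_div_add_le hpm hp1 hf.1 hg.1 hh ha hb).trans ?_⟩
  calc ENNReal.ofReal (a / (a + b)) * vModular p Ω (fun x => f x / a) +
        ENNReal.ofReal (b / (a + b)) * vModular p Ω (fun x => g x / b)
      ≤ ENNReal.ofReal (a / (a + b)) * 1 + ENNReal.ofReal (b / (a + b)) * 1 := by gcongr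
    _ = 1 := by
        rw [mul_one, mul_one, ← ENNReal.ofReal_add (by positivity) (by positivity), ← add_div,
          div_self (add_pos ha hb).ne', ENNReal.ofReal_one]

lemma LpTendsto.of_abs_sub_le (hpm : Measurable p) (hp1 : ∀ x ∈ Ω, 1 ≤ p x)
    {v w V : ℕ → Eu n → ℝ} {u₁ u₂ U : Eu n → ℝ}
    (hv : LpTendsto p Ω v u₁) (hw : LpTendsto p Ω w u₂)
    (hvm : ∀ i, MemLpVar p Ω (fun x => v i x - u₁ x))
    (hwm : ∀ i, MemLpVar p Ω (fun x => w i x - u₂ x))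
    (hV : ∀ i x, |V i x - U x| ≤ |v i x - u₁ x| + |w i x - u₂ x|) : LpTendsto p Ω V U :=
  squeeze_zero (fun _ => luxNorm_nonneg _)
    (fun i => luxNorm_le_add_of_abs_le_add hpm hp1 (hvm i) (hwm i) (hV i))
    (by simpa using hv.add hw)

end Modular

section Gradient

variable {E : Type*} [NormedAddCommGroup E] [NormedSpace ℝ E] {v w : E → ℝ} {x : E}

lemma fderiv_eq_of_le_of_eq {f g : E → ℝ} (hf : DifferentiableAt ℝ f x)
    (hg : DifferentiableAt ℝ g x) (hle : ∀ y, f y ≤ g y) (heq : f x = g x) :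
    fderiv ℝ f x = fderiv ℝ g x := by
  have hmin : IsLocalMin (fun y => g y - f y) x :=
    Eventually.of_forall fun y => by simpa [heq] using hle y
  have h0 := hmin.fderiv_eq_zero
  rw [fderiv_fun_sub hg hf, sub_eq_zero] at h0
  exact h0.symm

lemma norm_fderiv_max_le (hv : DifferentiableAt ℝ v x) (hwv : w x ≤ v x) :
    ‖fderiv ℝ (fun y => max (v y) (w y)) x‖ ≤ ‖fderiv ℝ v x‖ := by
  by_cases hd : DifferentiableAt ℝ (fun y => max (v y) (w y)) x
  · rw [fderiv_eq_of_le_of_eq hv hd (fun y => le_max_left _ _) (max_eq_left hwv).symm]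
  · rw [fderiv_zero_of_not_differentiableAt hd, norm_zero]
    exact norm_nonneg _

lemma norm_fderiv_min_le (hw : DifferentiableAt ℝ w x) (hwv : w x ≤ v x) :
    ‖fderiv ℝ (fun y => min (v y) (w y)) x‖ ≤ ‖fderiv ℝ w x‖ := by
  by_cases hd : DifferentiableAt ℝ (fun y => min (v y) (w y)) x
  · rw [fderiv_eq_of_le_of_eq hd hw (fun y => min_le_right _ _) (min_eq_right hwv)]
  · rw [fderiv_zero_of_not_differentiableAt hd, norm_zero]
    exact norm_nonneg _

lemma rpow_norm_fderiv_max_add_min_le (hv : DifferentiableAt ℝ v x)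
    (hw : DifferentiableAt ℝ w x) {q : ℝ} (hq : 0 ≤ q) :
    ‖fderiv ℝ (fun y => max (v y) (w y)) x‖ ^ q + ‖fderiv ℝ (fun y => min (v y) (w y)) x‖ ^ q ≤
      ‖fderiv ℝ v x‖ ^ q + ‖fderiv ℝ w x‖ ^ q := by
  wlog hwv : w x ≤ v x generalizing v w
  · simpa only [max_comm, min_comm, add_comm] using this hw hv (le_of_not_ge hwv)
  exact add_le_add (Real.rpow_le_rpow (norm_nonneg _) (norm_fderiv_max_le hv hwv) hq)
    (Real.rpow_le_rpow (norm_nonneg _) (norm_fderiv_min_le hw hwv) hq)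

end Gradient

section LocLip

variable {n : ℕ} {p : Eu n → ℝ} {Ω : Set (Eu n)} {v w : Eu n → ℝ}

lemma LocLipOn.max (hv : LocLipOn Ω v) (hw : LocLipOn Ω w) :
    LocLipOn Ω (fun x => max (v x) (w x)) := fun x hx => by
  obtain ⟨K₁, t₁, ht₁, h₁⟩ := hv x hx
  obtain ⟨K₂, t₂, ht₂, h₂⟩ := hw x hx
  exact ⟨K₁ ⊔ K₂, t₁ ∩ t₂, inter_mem ht₁ ht₂, lipschitzOnWith_iff_restrict.2
    ((h₁.mono inter_subset_left).to_restrict.max (h₂.mono inter_subset_right).to_restrict)⟩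

lemma LocLipOn.min (hv : LocLipOn Ω v) (hw : LocLipOn Ω w) :
    LocLipOn Ω (fun x => min (v x) (w x)) := fun x hx => by
  obtain ⟨K₁, t₁, ht₁, h₁⟩ := hv x hx
  obtain ⟨K₂, t₂, ht₂, h₂⟩ := hw x hx
  exact ⟨K₁ ⊔ K₂, t₁ ∩ t₂, inter_mem ht₁ ht₂, lipschitzOnWith_iff_restrict.2
    ((h₁.mono inter_subset_left).to_restrict.min (h₂.mono inter_subset_right).to_restrict)⟩

lemma LocLipOn.ae_differentiableAt (hΩ : IsOpen Ω) (hv : LocLipOn Ω v) :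
    ∀ᵐ x, x ∈ Ω → DifferentiableAt ℝ v x := by
  rw [ae_iff]
  refine measure_null_of_locally_null _ fun x hx => ?_
  obtain ⟨hxΩ, -⟩ := Classical.not_imp.1 hx
  obtain ⟨K, t, ht, hlip⟩ := hv x hxΩ
  rw [hΩ.nhdsWithin_eq hxΩ] at ht
  refine ⟨_, inter_mem_nhdsWithin _ (interior_mem_nhds.2 ht), ?_⟩
  have hae := (hlip.mono interior_subset).ae_differentiableWithinAt_of_mem (μ := volume)
  rw [ae_iff] at hae
  refine measure_mono_null (fun y ⟨hy, hyt⟩ => Classical.not_imp.2 ⟨hyt, fun hd => ?_⟩) hae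
  exact (Classical.not_imp.1 hy).2 (hd.differentiableAt (isOpen_interior.mem_nhds hyt))

lemma gradModular_max_add_min_le (hΩ : IsOpen Ω) (hpm : Measurable p)
    (hp0 : ∀ x ∈ Ω, 0 ≤ p x) (hv : LocLipOn Ω v) (hw : LocLipOn Ω w) :
    gradModular p Ω (fun x => max (v x) (w x)) + gradModular p Ω (fun x => min (v x) (w x)) ≤
      gradModular p Ω v + gradModular p Ω w := by
  have hmeas : ∀ u : Eu n → ℝ, Measurable fun x => ENNReal.ofReal (‖fderiv ℝ u x‖ ^ p x) :=
    fun u => ((measurable_fderiv ℝ u).norm.pow hpm).ennreal_ofReal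
  unfold gradModular
  rw [← lintegral_add_left (hmeas _), ← lintegral_add_left (hmeas v)]
  refine setLIntegral_mono_ae ((hmeas v).add (hmeas w)).aemeasurable ?_
  filter_upwards [hv.ae_differentiableAt hΩ, hw.ae_differentiableAt hΩ] with x hdv hdw hx
  rw [← ENNReal.ofReal_add (by positivity) (by positivity),
    ← ENNReal.ofReal_add (by positivity) (by positivity)]
  exact ENNReal.ofReal_le_ofReal
    (rpow_norm_fderiv_max_add_min_le (hdv hx) (hdw hx) (hp0 x hx))

end LocLip

lemma ENNReal.le_liminf_add {u v : ℕ → ℝ≥0∞} :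
    liminf u atTop + liminf v atTop ≤ liminf (u + v) atTop := by
  simp only [liminf_eq_iSup_iInf_of_nat]
  refine ENNReal.iSup_add_iSup_le fun k l => le_iSup_of_le (max k l) (le_iInf₂ fun i hi => ?_)
  exact add_le_add (iInf₂_le i (le_of_max_le_left hi)) (iInf₂_le i (le_of_max_le_right hi))

section BV

variable {n : ℕ} {p : Eu n → ℝ} {Ω : Set (Eu n)}

def IsBVApprox (p : Eu n → ℝ) (Ω : Set (Eu n)) (v : ℕ → Eu n → ℝ) (u : Eu n → ℝ) : Prop :=
  (∀ i, LocLipOn Ω (v i) ∧ MemLpVar p Ω (v i)) ∧ LpTendsto p Ω v u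

lemma bvModular_eq_iInf (u : Eu n → ℝ) :
    bvModular p Ω u =
      ⨅ (v) (_ : IsBVApprox p Ω v u), liminf (fun i => gradModular p Ω (v i)) atTop :=
  rfl

lemma bvModular_le_liminf {v : ℕ → Eu n → ℝ} {u : Eu n → ℝ} (hv : IsBVApprox p Ω v u) :
    bvModular p Ω u ≤ liminf (fun i => gradModular p Ω (v i)) atTop :=
  iInf₂_le v hv

lemma IsBVApprox.max (hpm : Measurable p) (hp1 : ∀ x ∈ Ω, 1 ≤ p x)
    {v w : ℕ → Eu n → ℝ} {u₁ u₂ : Eu n → ℝ} (hv : IsBVApprox p Ω v u₁)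
    (hw : IsBVApprox p Ω w u₂) (hu₁ : MemLpVar p Ω u₁) (hu₂ : MemLpVar p Ω u₂) :
    IsBVApprox p Ω (fun i x => max (v i x) (w i x)) (fun x => max (u₁ x) (u₂ x)) :=
  ⟨fun i => ⟨(hv.1 i).1.max (hw.1 i).1, (hv.1 i).2.max hpm hp1 (hw.1 i).2⟩,
    hv.2.of_abs_sub_le hpm hp1 hw.2 (fun i => (hv.1 i).2.sub hpm hp1 hu₁)
      (fun i => (hw.1 i).2.sub hpm hp1 hu₂) fun _ _ => abs_max_sub_max_le_add _ _ _ _⟩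

lemma IsBVApprox.min (hpm : Measurable p) (hp1 : ∀ x ∈ Ω, 1 ≤ p x)
    {v w : ℕ → Eu n → ℝ} {u₁ u₂ : Eu n → ℝ} (hv : IsBVApprox p Ω v u₁)
    (hw : IsBVApprox p Ω w u₂) (hu₁ : MemLpVar p Ω u₁) (hu₂ : MemLpVar p Ω u₂) :
    IsBVApprox p Ω (fun i x => min (v i x) (w i x)) (fun x => min (u₁ x) (u₂ x)) :=
  ⟨fun i => ⟨(hv.1 i).1.min (hw.1 i).1, (hv.1 i).2.min hpm hp1 (hw.1 i).2⟩,
    hv.2.of_abs_sub_le hpm hp1 hw.2 (fun i => (hv.1 i).2.sub hpm hp1 hu₁)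
      (fun i => (hw.1 i).2.sub hpm hp1 hu₂) fun _ _ => abs_min_sub_min_le_add _ _ _ _⟩

lemma IsBVApprox.exists_tendsto_liminf {v : ℕ → Eu n → ℝ} {u : Eu n → ℝ}
    (hv : IsBVApprox p Ω v u) :
    ∃ V, IsBVApprox p Ω V u ∧ Tendsto (fun i => gradModular p Ω (V i)) atTop
      (𝓝 (liminf (fun i => gradModular p Ω (v i)) atTop)) := by
  obtain ⟨φ, hlim, hφ⟩ := exists_seq_tendsto_liminf (u := fun i => gradModular p Ω (v i))
    (f := atTop)
  exact ⟨v ∘ φ, ⟨fun i => hv.1 (φ i), hv.2.comp hφ⟩, hlim⟩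

lemma bvModular_max_add_min_le (hΩ : IsOpen Ω) (hpm : Measurable p)
    (hp1 : ∀ x ∈ Ω, 1 ≤ p x) {u₁ u₂ : Eu n → ℝ} (hu₁ : MemLpVar p Ω u₁)
    (hu₂ : MemLpVar p Ω u₂) :
    bvModular p Ω (fun x => max (u₁ x) (u₂ x)) + bvModular p Ω (fun x => min (u₁ x) (u₂ x)) ≤
      bvModular p Ω u₁ + bvModular p Ω u₂ := by
  rw [bvModular_eq_iInf u₁, bvModular_eq_iInf u₂]
  refine ENNReal.le_iInf₂_add_iInf₂ fun v hv w hw => ?_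
  obtain ⟨V, hV, hVlim⟩ := hv.exists_tendsto_liminf
  obtain ⟨W, hW, hWlim⟩ := hw.exists_tendsto_liminf
  have hp0 : ∀ x ∈ Ω, 0 ≤ p x := fun x hx => zero_le_one.trans (hp1 x hx)
  calc bvModular p Ω (fun x => max (u₁ x) (u₂ x)) + bvModular p Ω (fun x => min (u₁ x) (u₂ x))
      ≤ liminf (fun i => gradModular p Ω (fun x => max (V i x) (W i x))) atTop +
          liminf (fun i => gradModular p Ω (fun x => min (V i x) (W i x))) atTop :=
        add_le_add (bvModular_le_liminf (hV.max hpm hp1 hW hu₁ hu₂))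
          (bvModular_le_liminf (hV.min hpm hp1 hW hu₁ hu₂))
    _ ≤ liminf (fun i => gradModular p Ω (fun x => max (V i x) (W i x)) +
          gradModular p Ω (fun x => min (V i x) (W i x))) atTop :=
        ENNReal.le_liminf_add
    _ ≤ liminf (fun i => gradModular p Ω (V i) + gradModular p Ω (W i)) atTop :=
        liminf_le_liminf (Eventually.of_forall fun i =>
          gradModular_max_add_min_le hΩ hpm hp0 (hV.1 i).1 (hW.1 i).1)
    _ = liminf (fun i => gradModular p Ω (v i)) atTop +
          liminf (fun i => gradModular p Ω (w i)) atTop := (hVlim.add hWlim).liminf_eq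

lemma MemBVt.max_add_min (hΩ : IsOpen Ω) (hpm : Measurable p) (hp1 : ∀ x ∈ Ω, 1 ≤ p x)
    {u₁ u₂ : Eu n → ℝ} (hu₁ : MemBVt p Ω u₁) (hu₂ : MemBVt p Ω u₂) :
    MemBVt p Ω (fun x => max (u₁ x) (u₂ x)) ∧ MemBVt p Ω (fun x => min (u₁ x) (u₂ x)) := by
  have hsum := (bvModular_max_add_min_le hΩ hpm hp1 hu₁.1 hu₂.1).trans_lt
    (ENNReal.add_lt_top.2 ⟨hu₁.2, hu₂.2⟩)
  exact ⟨⟨hu₁.1.max hpm hp1 hu₂.1, (le_self_add.trans_lt hsum)⟩,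
    ⟨hu₁.1.min hpm hp1 hu₂.1, (le_add_self.trans_lt hsum)⟩⟩

lemma max_mem_admissibleBV (hΩ : IsOpen Ω) (hpm : Measurable p) (hp1 : ∀ x ∈ Ω, 1 ≤ p x)
    {E₁ E₂ : Set (Eu n)} {u₁ u₂ : Eu n → ℝ} (hu₁ : u₁ ∈ admissibleBV p Ω E₁)
    (hu₂ : u₂ ∈ admissibleBV p Ω E₂) :
    (fun x => max (u₁ x) (u₂ x)) ∈ admissibleBV p Ω (E₁ ∪ E₂) := by
  obtain ⟨hbv₁, hb₁, U₁, hU₁, hEU₁, hone₁⟩ := hu₁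
  obtain ⟨hbv₂, hb₂, U₂, hU₂, hEU₂, hone₂⟩ := hu₂
  refine ⟨(hbv₁.max_add_min hΩ hpm hp1 hbv₂).1,
    fun x hx => ⟨(hb₁ x hx).1.trans (le_max_left _ _), max_le (hb₁ x hx).2 (hb₂ x hx).2⟩,
    U₁ ∪ U₂, hU₁.union hU₂, union_subset_union hEU₁ hEU₂, ?_⟩
  rintro x ⟨hx₁ | hx₂, hx⟩
  · simp only [hone₁ x ⟨hx₁, hx⟩, max_eq_left (hb₂ x hx).2]
  · simp only [hone₂ x ⟨hx₂, hx⟩, max_eq_right (hb₁ x hx).2]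

lemma min_mem_admissibleBV (hΩ : IsOpen Ω) (hpm : Measurable p) (hp1 : ∀ x ∈ Ω, 1 ≤ p x)
    {E₁ E₂ : Set (Eu n)} {u₁ u₂ : Eu n → ℝ} (hu₁ : u₁ ∈ admissibleBV p Ω E₁)
    (hu₂ : u₂ ∈ admissibleBV p Ω E₂) :
    (fun x => min (u₁ x) (u₂ x)) ∈ admissibleBV p Ω (E₁ ∩ E₂) := by
  obtain ⟨hbv₁, hb₁, U₁, hU₁, hEU₁, hone₁⟩ := hu₁
  obtain ⟨hbv₂, hb₂, U₂, hU₂, hEU₂, hone₂⟩ := hu₂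
  refine ⟨(hbv₁.max_add_min hΩ hpm hp1 hbv₂).2,
    fun x hx => ⟨le_min (hb₁ x hx).1 (hb₂ x hx).1, (min_le_left _ _).trans (hb₁ x hx).2⟩,
    U₁ ∩ U₂, hU₁.inter hU₂, inter_subset_inter hEU₁ hEU₂, ?_⟩
  rintro x ⟨⟨hx₁, hx₂⟩, hx⟩
  simp only [hone₁ x ⟨hx₁, hx⟩, hone₂ x ⟨hx₂, hx⟩, min_self]

end BV

theorem bvCapacity_strong_subadditive_general
    {n : ℕ} (p : Eu n → ℝ) (Ω : Set (Eu n)) (hΩ : IsOpen Ω)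
    (hpm : Measurable p) (hp1 : ∀ x ∈ Ω, 1 ≤ p x)
    (E₁ E₂ : Set (Eu n)) :
    bvCapacity p Ω (E₁ ∪ E₂) + bvCapacity p Ω (E₁ ∩ E₂) ≤
      bvCapacity p Ω E₁ + bvCapacity p Ω E₂ := by
  refine ENNReal.le_iInf₂_add_iInf₂ fun u₁ hu₁ u₂ hu₂ => ?_
  set M := fun x => max (u₁ x) (u₂ x)
  set m := fun x => min (u₁ x) (u₂ x)
  calc bvCapacity p Ω (E₁ ∪ E₂) + bvCapacity p Ω (E₁ ∩ E₂)
      ≤ (vModular p Ω M + bvModular p Ω M) + (vModular p Ω m + bvModular p Ω m) :=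
        add_le_add (iInf₂_le _ (max_mem_admissibleBV hΩ hpm hp1 hu₁ hu₂))
          (iInf₂_le _ (min_mem_admissibleBV hΩ hpm hp1 hu₁ hu₂))
    _ = (vModular p Ω M + vModular p Ω m) + (bvModular p Ω M + bvModular p Ω m) :=
        add_add_add_comm _ _ _ _
    _ ≤ (vModular p Ω u₁ + vModular p Ω u₂) + (bvModular p Ω u₁ + bvModular p Ω u₂) :=
        add_le_add (vModular_max_add_min hpm hu₁.1.1.1 hu₂.1.1.1).le
          (bvModular_max_add_min_le hΩ hpm hp1 hu₁.1.1 hu₂.1.1)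
    _ = (vModular p Ω u₁ + bvModular p Ω u₁) + (vModular p Ω u₂ + bvModular p Ω u₂) :=
        add_add_add_comm _ _ _ _

/-- strong subadditivity of the mixed capacity. -/
theorem bvCapacity_strong_subadditive
    {n : ℕ} (p : Eu n → ℝ) (Ω : Set (Eu n)) (hΩ : IsOpen Ω)
    (hpm : Measurable p) (hp1 : ∀ x ∈ Ω, 1 ≤ p x) (hpb : ∃ M : ℝ, ∀ x ∈ Ω, p x ≤ M)
    (E₁ E₂ : Set (Eu n)) (h₁ : E₁ ⊆ Ω) (h₂ : E₂ ⊆ Ω) :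
    bvCapacity p Ω (E₁ ∪ E₂) + bvCapacity p Ω (E₁ ∩ E₂) ≤
      bvCapacity p Ω E₁ + bvCapacity p Ω E₂ :=
  bvCapacity_strong_subadditive_general p Ω hΩ hpm hp1 E₁ E₂
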